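/- Let G = ((X,Y),E) be a connected split graph with stretch index σ(G) = 2 and even maximum degree Δ(G), and let P be the set of pendant vertices of G. Then G is neighborhood-overfull if and only if there exists a vertex v ∈ X such that v is universal in the induced subgraph G[V ∖ P], Δ(G[N[v]]) = Δ(G), and G[N[v]] is overfull. -/

import Mathlib

open SimpleGraph Set

variable {V : Type*}

/-- The degree of a vertex `v` in `G` (as the cardinality of its neighbor set). -/
noncomputable def vdeg (G : SimpleGraph V) (v : V) : ℕ := (G.neighborSet v).ncard

/-- The maximum degree `Δ(G)` of `G`. -/
noncomputable def maxDeg (G : SimpleGraph V) : ℕ :=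
  sSup (Set.range fun v => vdeg G v)

/-- The number of edges `|E(G)|` of `G`. -/
noncomputable def edgeCount (G : SimpleGraph V) : ℕ := G.edgeSet.ncard

/-- A graph `G` on `n` vertices is overfull if `|E(G)| > Δ(G) * ⌊n/2⌋`. -/
def IsOverfull (G : SimpleGraph V) : Prop :=
  edgeCount G > maxDeg G * (Nat.card V / 2)

/-- `G` is subgraph-overfull if it has a subgraph `H` with `Δ(H) = Δ(G)` that is overfull. -/
def IsSubgraphOverfull (G : SimpleGraph V) : Prop :=
  ∃ (s : Set V) (H : SimpleGraph s),
    (∀ u v : s, H.Adj u v → G.Adj u.1 v.1) ∧ maxDeg H = maxDeg G ∧ IsOverfull H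

/-- The closed neighborhood `N[v] = N(v) ∪ {v}` of a vertex `v`. -/
def closedNbhd (G : SimpleGraph V) (v : V) : Set V := insert v (G.neighborSet v)

/-- `G` is neighborhood-overfull if some vertex `v` of maximum degree is such that the
subgraph induced by its closed neighborhood `N[v]` is overfull. -/
def IsNbhdOverfull (G : SimpleGraph V) : Prop :=
  ∃ v, vdeg G v = maxDeg G ∧ IsOverfull (G.induce (closedNbhd G v))

/-- A proper edge coloring of `G` with `n` colors: edges sharing a vertex get distinct colors. -/
def EdgeColorable (G : SimpleGraph V) (n : ℕ) : Prop :=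
  ∃ c : G.edgeSet → Fin n, ∀ e f : G.edgeSet,
    e ≠ f → (∃ v, v ∈ (e : Sym2 V) ∧ v ∈ (f : Sym2 V)) → c e ≠ c f

/-- The chromatic index `χ'(G)`. -/
noncomputable def chromIndex (G : SimpleGraph V) : ℕ :=
  sInf {n | EdgeColorable G n}

/-- A proper total coloring of `G` with `n` colors: adjacent vertices get distinct colors,
edges sharing a vertex get distinct colors, and each vertex gets a color distinct from all
its incident edges. -/
def TotalColorable (G : SimpleGraph V) (n : ℕ) : Prop :=
  ∃ (cv : V → Fin n) (ce : G.edgeSet → Fin n),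
    (∀ u v, G.Adj u v → cv u ≠ cv v) ∧
    (∀ e f : G.edgeSet, e ≠ f → (∃ v, v ∈ (e : Sym2 V) ∧ v ∈ (f : Sym2 V)) → ce e ≠ ce f) ∧
    (∀ (v : V) (e : G.edgeSet), v ∈ (e : Sym2 V) → cv v ≠ ce e)

/-- The total chromatic number `χ''(G)`. -/
noncomputable def totalChrom (G : SimpleGraph V) : ℕ :=
  sInf {n | TotalColorable G n}

/-- `T` is a tree `t`-spanner of `G`: a spanning tree of `G` in which any two vertices
adjacent in `G` are at distance at most `t`. -/
def IsTreeSpanner (G T : SimpleGraph V) (t : ℕ) : Prop :=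
  T ≤ G ∧ T.IsTree ∧ ∀ u v, G.Adj u v → T.dist u v ≤ t

/-- The stretch index `σ(G)`: the least `t ≥ 1` such that `G` admits a tree `t`-spanner. -/
noncomputable def stretchIndex (G : SimpleGraph V) : ℕ :=
  sInf {t | 1 ≤ t ∧ ∃ T, IsTreeSpanner G T t}

/-- `(X, Y)` is a split partition of `G`: `X` is a clique, `Y` is an independent set,
and they partition the vertex set. -/
def IsSplitPartition (G : SimpleGraph V) (X Y : Set V) : Prop :=
  X ∪ Y = Set.univ ∧ Disjoint X Y ∧ G.IsClique X ∧ ∀ u ∈ Y, ∀ v ∈ Y, ¬ G.Adj u v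

/-- `G` is a split graph. -/
def IsSplitGraph (G : SimpleGraph V) : Prop := ∃ X Y, IsSplitPartition G X Y

/-- `X` is a maximal clique of `G`. -/
def IsMaximalClique (G : SimpleGraph V) (X : Set V) : Prop :=
  G.IsClique X ∧ ∀ X', G.IsClique X' → X ⊆ X' → X' = X

/-- `v` is a universal vertex of `G`: it is adjacent to every other vertex. -/
def UniversalVertex (G : SimpleGraph V) (v : V) : Prop := ∀ u, u ≠ v → G.Adj v u

/-- `v` is universal in the subgraph of `G` induced by a set `s` of vertices. -/
def UniversalIn (G : SimpleGraph V) (s : Set V) (v : V) : Prop :=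
  v ∈ s ∧ ∀ u ∈ s, u ≠ v → G.Adj v u

/-- The set of pendant (degree-one) vertices of `G`. -/
def pendants (G : SimpleGraph V) : Set V := {v | vdeg G v = 1}

/-- The matching number `α'(G)`: the maximum number of pairwise disjoint edges of `G`. -/
noncomputable def matchingNum (G : SimpleGraph V) : ℕ :=
  sSup {n | ∃ M : G.Subgraph, M.IsMatching ∧ M.edgeSet.ncard = n}

/-! ### Auxiliary lemmas -/

lemma path_eq' {T : SimpleGraph V} (hT : T.IsAcyclic) {a b : V} (p q : T.Walk a b)
    (hp : p.IsPath) (hq : q.IsPath) : p = q :=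
  congrArg Subtype.val (isAcyclic_iff_path_unique.mp hT ⟨p, hp⟩ ⟨q, hq⟩)

lemma T21 {T : SimpleGraph V} (hT : T.IsAcyclic) {a b c : V}
    (h1 : T.Adj a b) (h2 : T.Adj b c) (h3 : T.Adj a c) : False := by
  have hp : (Walk.cons h1 (Walk.cons h2 Walk.nil)).IsPath := by
    simp [Walk.isPath_def, h1.ne, h2.ne, h3.ne]
  have hq : (Walk.cons h3 Walk.nil).IsPath := by simp [h3.ne]
  have h := congrArg Walk.length (path_eq' hT _ _ hp hq)
  simp at h

lemma T22 {T : SimpleGraph V} (hT : T.IsAcyclic) {a b c d : V} (hac : a ≠ c)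
    (h1 : T.Adj a b) (h2 : T.Adj b c) (h3 : T.Adj a d) (h4 : T.Adj d c) : b = d := by
  have hp : (Walk.cons h1 (Walk.cons h2 Walk.nil)).IsPath := by
    simp [Walk.isPath_def, h1.ne, h2.ne, hac]
  have hq : (Walk.cons h3 (Walk.cons h4 Walk.nil)).IsPath := by
    simp [Walk.isPath_def, h3.ne, h4.ne, hac]
  have h := congrArg Walk.support (path_eq' hT _ _ hp hq)
  simp at h
  exact h

lemma T32 {T : SimpleGraph V} (hT : T.IsAcyclic) {a b c d e : V}
    (hac : a ≠ c) (had : a ≠ d) (hbd : b ≠ d)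
    (h1 : T.Adj a b) (h2 : T.Adj b c) (h3 : T.Adj c d)
    (h4 : T.Adj a e) (h5 : T.Adj e d) : False := by
  have hp : (Walk.cons h1 (Walk.cons h2 (Walk.cons h3 Walk.nil))).IsPath := by
    simp [Walk.isPath_def, h1.ne, h2.ne, h3.ne, hac, had, hbd]
  have hq : (Walk.cons h4 (Walk.cons h5 Walk.nil)).IsPath := by
    simp [Walk.isPath_def, h4.ne, h5.ne, had]
  have h := congrArg Walk.length (path_eq' hT _ _ hp hq)
  simp at h

lemma T42 {T : SimpleGraph V} (hT : T.IsAcyclic) {a b c d e f : V}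
    (hac : a ≠ c) (had : a ≠ d) (hae : a ≠ e) (hbd : b ≠ d) (hbe : b ≠ e) (hce : c ≠ e)
    (h1 : T.Adj a b) (h2 : T.Adj b c) (h3 : T.Adj c d) (h4 : T.Adj d e)
    (h5 : T.Adj a f) (h6 : T.Adj f e) : False := by
  have hp : (Walk.cons h1 (Walk.cons h2 (Walk.cons h3 (Walk.cons h4 Walk.nil)))).IsPath := by
    simp [Walk.isPath_def, h1.ne, h2.ne, h3.ne, h4.ne, hac, had, hae, hbd, hbe, hce]
  have hq : (Walk.cons h5 (Walk.cons h6 Walk.nil)).IsPath := by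
    simp [Walk.isPath_def, h5.ne, h6.ne, hae]
  have h := congrArg Walk.length (path_eq' hT _ _ hp hq)
  simp at h

lemma walk_short {T : SimpleGraph V} {a b : V} (hre : T.Reachable a b) (hab : a ≠ b)
    (hd : T.dist a b ≤ 2) : T.Adj a b ∨ ∃ w, T.Adj a w ∧ T.Adj w b := by
  obtain ⟨p, hp⟩ := hre.exists_walk_length_eq_dist
  have hl : p.length ≤ 2 := hp ▸ hd
  clear hp hd
  cases p with
  | nil => exact absurd rfl hab
  | cons h q =>
    cases q with
    | nil => exact Or.inl h
    | cons h' r =>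
      cases r with
      | nil => exact Or.inr ⟨_, h, h'⟩
      | cons h'' s => simp [Walk.length_cons] at hl

lemma exists_center [Fintype V] (G : SimpleGraph V) (X Y : Set V)
    (hsplit : IsSplitPartition G X Y) (hmax : IsMaximalClique G X) (hconn : G.Connected)
    (T : SimpleGraph V) (hTS : IsTreeSpanner G T 2) :
    ∃ c, ∀ u, vdeg G u ≠ 1 → u ≠ c → G.Adj c u := by
  obtain ⟨hle, hTree, hdist⟩ := hTS
  have hacyc := hTree.2
  have pre := hTree.1.preconnected
  obtain ⟨hXY, hdisj, hclX, hindY⟩ := hsplit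
  have hXne : X.Nonempty := by
    rcases X.eq_empty_or_nonempty with h | h
    · obtain ⟨v₀⟩ := hconn.nonempty
      have h1 : G.IsClique {v₀} := by simp
      have h2 := hmax.2 {v₀} h1 (by simp [h])
      exact absurd (h2 ▸ (Set.mem_singleton v₀) : v₀ ∈ X) (by simp [h])
    · exact h
  suffices h : ∃ c, ∀ x ∈ X, x ≠ c → T.Adj c x by
    obtain ⟨c, hc⟩ := h
    refine ⟨c, fun u hnp hne => ?_⟩
    by_contra hnadj
    have huX : u ∉ X := fun hu => hnadj (hle (hc u hu hne))
    have huY : u ∈ Y := by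
      have h0 : u ∈ X ∪ Y := hXY.symm ▸ Set.mem_univ u
      rcases h0 with h0 | h0
      · exact absurd h0 huX
      · exact h0
    have hNX : G.neighborSet u ⊆ X := by
      intro w hw
      have h0 : w ∈ X ∪ Y := hXY.symm ▸ Set.mem_univ w
      rcases h0 with h0 | h0
      · exact h0
      · exact absurd hw (hindY u huY w h0)
    have h1 : (G.neighborSet u).Nonempty := by
      obtain ⟨p⟩ := hconn.preconnected u c
      cases p with
      | nil => exact absurd rfl hne
      | cons h q => exact ⟨_, h⟩
    have h2 : 1 < (G.neighborSet u).ncard := by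
      have hpos : 0 < (G.neighborSet u).ncard := (Set.ncard_pos (Set.toFinite _)).mpr h1
      have : (G.neighborSet u).ncard ≠ 1 := hnp
      omega
    obtain ⟨m, hm, x₂, hx₂, hmx⟩ := (Set.one_lt_ncard (Set.toFinite _)).mp h2
    have hGum : G.Adj u m := hm
    have hGux : G.Adj u x₂ := hx₂
    have hmc : m ≠ c := fun h => hnadj ((h ▸ hGum).symm)
    have hx₂c : x₂ ≠ c := fun h => hnadj ((h ▸ hGux).symm)
    have hTcm : T.Adj c m := hc m (hNX hm) hmc
    have hTcx : T.Adj c x₂ := hc x₂ (hNX hx₂) hx₂c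
    rcases walk_short (pre u m) hGum.ne (hdist u m hGum) with hum | ⟨w₁, huw₁, hw₁m⟩
    · rcases walk_short (pre u x₂) hGux.ne (hdist u x₂ hGux) with hux | ⟨w₂, huw₂, hw₂x⟩
      · exact hne (T22 hacyc hmx hum.symm hux hTcm.symm hTcx)
      · by_cases hwc : w₂ = c
        · exact hnadj ((hle (hwc ▸ huw₂)).symm)
        by_cases hwm : w₂ = m
        · exact T21 hacyc hTcm (hwm ▸ hw₂x) hTcx
        · exact T32 hacyc (Ne.symm hwm) hmx hGux.ne hum.symm huw₂ hw₂x hTcm.symm hTcx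
    · by_cases hw₁c : w₁ = c
      · exact hnadj ((hle (hw₁c ▸ huw₁)).symm)
      rcases walk_short (pre u x₂) hGux.ne (hdist u x₂ hGux) with hux | ⟨w₂, huw₂, hw₂x⟩
      · by_cases hwx : w₁ = x₂
        · exact T21 hacyc hTcx (hwx ▸ hw₁m) hTcm
        · exact T32 hacyc (Ne.symm hGum.ne) hmx hwx hw₁m.symm huw₁.symm hux hTcm.symm hTcx
      · by_cases hw₂c : w₂ = c
        · exact hnadj ((hle (hw₂c ▸ huw₂)).symm)
        by_cases hww : w₁ = w₂
        · exact hw₁c (T22 hacyc hmx hw₁m.symm (hww ▸ hw₂x) hTcm.symm hTcx)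
        by_cases hw₁x : w₁ = x₂
        · exact T21 hacyc hTcx (hw₁x ▸ hw₁m) hTcm
        by_cases hw₂m : w₂ = m
        · exact T21 hacyc hTcm (hw₂m ▸ hw₂x) hTcx
        · exact T42 hacyc (Ne.symm hGum.ne) (Ne.symm hw₂m) hmx hww hw₁x hGux.ne
            hw₁m.symm huw₁.symm huw₂ hw₂x hTcm.symm hTcx
  by_cases hall : ∀ x ∈ X, ∀ y ∈ X, x ≠ y → T.Adj x y
  · obtain ⟨x₀, hx₀⟩ := hXne
    exact ⟨x₀, fun x hx hne => hall x₀ hx₀ x hx (Ne.symm hne)⟩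
  · push_neg at hall
    obtain ⟨x, hx, y, hy, hxy, hnT⟩ := hall
    have hGxy : G.Adj x y := hclX hx hy hxy
    rcases walk_short (pre x y) hxy (hdist x y hGxy) with hAdj | ⟨c₀, hxc, hcy⟩
    · exact absurd hAdj hnT
    refine ⟨c₀, fun z hz hzc => ?_⟩
    by_cases hzx : z = x
    · exact hzx ▸ hxc.symm
    by_cases hzy : z = y
    · exact hzy ▸ hcy
    have hGzx : G.Adj z x := hclX hz hx hzx
    have hGzy : G.Adj z y := hclX hz hy hzy
    rcases walk_short (pre z x) hGzx.ne (hdist z x hGzx) with hzx1 | ⟨w₁, hzw₁, hw₁x⟩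
    · rcases walk_short (pre z y) hGzy.ne (hdist z y hGzy) with hzy1 | ⟨w₂, hzw₂, hw₂y⟩
      · exact absurd (T22 hacyc hxy hxc hcy hzx1.symm hzy1).symm hzc
      · by_cases hw₂c : w₂ = c₀
        · exact (hw₂c ▸ hzw₂).symm
        by_cases hw₂x : w₂ = x
        · exact absurd (hw₂x ▸ hw₂y) hnT
        · exact (T32 hacyc (Ne.symm hw₂x) hxy hzy hzx1.symm hzw₂ hw₂y hxc hcy).elim
    · by_cases hw₁c : w₁ = c₀
      · exact (hw₁c ▸ hzw₁).symm
      rcases walk_short (pre z y) hGzy.ne (hdist z y hGzy) with hzy1 | ⟨w₂, hzw₂, hw₂y⟩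
      · by_cases hw₁y : w₁ = y
        · exact absurd (hw₁y ▸ hw₁x).symm hnT
        · exact (T32 hacyc (Ne.symm hw₁y) (Ne.symm hxy) hzx hzy1.symm hzw₁ hw₁x
            hcy.symm hxc.symm).elim
      · by_cases hw₂c : w₂ = c₀
        · exact (hw₂c ▸ hzw₂).symm
        by_cases hww : w₁ = w₂
        · exact absurd (T22 hacyc hxy hw₁x.symm (hww ▸ hw₂y) hxc hcy) hw₁c
        by_cases hw₁y : w₁ = y
        · exact absurd (hw₁y ▸ hw₁x).symm hnT
        by_cases hw₂x : w₂ = x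
        · exact absurd (hw₂x ▸ hw₂y) hnT
        · exact (T42 hacyc (Ne.symm hzx) (Ne.symm hw₂x) hxy hww hw₁y hzy
            hw₁x.symm hzw₁.symm hzw₂ hw₂y hxc hcy).elim

lemma vdeg_le_maxDeg [Finite V] (G : SimpleGraph V) (w : V) : vdeg G w ≤ maxDeg G :=
  le_csSup (Set.Finite.bddAbove (Set.finite_range _)) ⟨w, rfl⟩

lemma vdeg_induce (G : SimpleGraph V) (A : Set V) (w : ↥A) :
    vdeg (G.induce A) w = (A ∩ G.neighborSet w.val).ncard := by
  rw [vdeg, ← Set.ncard_image_of_injective _ Subtype.val_injective]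
  congr 1
  ext x
  simp only [Set.mem_image, SimpleGraph.mem_neighborSet, SimpleGraph.comap_adj,
    Function.Embedding.coe_subtype, Set.mem_inter_iff]
  constructor
  · rintro ⟨u, hu, rfl⟩
    exact ⟨u.2, hu⟩
  · rintro ⟨hx, hadj⟩
    exact ⟨⟨x, hx⟩, hadj, rfl⟩

lemma vdeg_eq_degree {W : Type*} [Fintype W] (G' : SimpleGraph W) [DecidableRel G'.Adj] (v : W) :
    vdeg G' v = G'.degree v := by
  rw [vdeg, ← Nat.card_coe_set_eq, Nat.card_eq_fintype_card, card_neighborSet_eq_degree]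

lemma handshake {W : Type*} [Fintype W] (G' : SimpleGraph W) :
    ∑ w, vdeg G' w = 2 * edgeCount G' := by
  classical
  have h := G'.sum_degrees_eq_twice_card_edges
  have h2 : edgeCount G' = G'.edgeFinset.card := by
    rw [edgeCount, ← Nat.card_coe_set_eq, Nat.card_eq_fintype_card,
      ← SimpleGraph.edgeFinset_card]
  rw [h2, ← h]
  exact Finset.sum_congr rfl fun w _ => vdeg_eq_degree G' w

lemma ncard_closedNbhd [Fintype V] (G : SimpleGraph V) (v : V) :
    (closedNbhd G v).ncard = vdeg G v + 1 := by
  rw [closedNbhd, Set.ncard_insert_of_notMem (by simp) (Set.toFinite _), vdeg]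

/-- A connected `(σ = 2)`-split graph `G` with even maximum degree is neighborhood-overfull
iff there is a vertex `v ∈ X` that is universal in `G[V ∖ P]` (where `P` is the set of
pendant vertices), with `Δ(G[N[v]]) = Δ(G)` and `G[N[v]]` overfull. -/
theorem stmt9 [Fintype V] (G : SimpleGraph V) (X Y : Set V)
    (hsplit : IsSplitPartition G X Y) (hmax : IsMaximalClique G X)
    (hconn : G.Connected) (hsigma : stretchIndex G = 2) (heven : Even (maxDeg G)) :
    IsNbhdOverfull G ↔
      ∃ v ∈ X, UniversalIn G (pendants G)ᶜ v ∧
        maxDeg (G.induce (closedNbhd G v)) = maxDeg G ∧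
        IsOverfull (G.induce (closedNbhd G v)) := by
  classical
  have hNV : Nonempty V := hconn.nonempty
  obtain ⟨hXY, hdisj, hclX, hindY⟩ := hsplit
  constructor
  · -- forward direction
    rintro ⟨v, hvdeg, hov⟩
    -- get a tree 2-spanner and a center c adjacent to all non-pendant vertices
    have h2mem : 2 ∈ {t | 1 ≤ t ∧ ∃ T, IsTreeSpanner G T t} := by
      have hne : {t | 1 ≤ t ∧ ∃ T, IsTreeSpanner G T t}.Nonempty := by
        by_contra h
        rw [Set.not_nonempty_iff_eq_empty] at h
        have h0 : stretchIndex G = 0 := by rw [stretchIndex, h, Nat.sInf_empty]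
        omega
      have hmem := Nat.sInf_mem hne
      rw [← stretchIndex, hsigma] at hmem
      exact hmem
    obtain ⟨-, T, hTS⟩ := h2mem
    obtain ⟨c, hc⟩ := exists_center G X Y ⟨hXY, hdisj, hclX, hindY⟩ hmax hconn T hTS
    set Δ := maxDeg G with hΔdef
    set A := closedNbhd G v with hAdef
    have hvA : v ∈ A := Set.mem_insert _ _
    have hNA : Nonempty ↥A := ⟨⟨v, hvA⟩⟩
    have hcardA : A.ncard = Δ + 1 := by rw [hAdef, ncard_closedNbhd, hvdeg]
    have hNsub : G.neighborSet v ⊆ A := fun x hx => Set.mem_insert_of_mem _ hx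
    -- max degree of the induced subgraph equals Δ
    have hHle : ∀ w : ↥A, vdeg (G.induce A) w ≤ Δ := by
      intro w
      rw [vdeg_induce]
      exact le_trans (Set.ncard_le_ncard Set.inter_subset_right (Set.toFinite _))
        (vdeg_le_maxDeg G w.val)
    have hvH : vdeg (G.induce A) ⟨v, hvA⟩ = Δ := by
      rw [vdeg_induce, Set.inter_eq_self_of_subset_right hNsub, ← vdeg, hvdeg]
    have hmaxH : maxDeg (G.induce A) = Δ := by
      refine le_antisymm (csSup_le (Set.range_nonempty _) ?_)
        (hvH ▸ le_csSup (Set.Finite.bddAbove (Set.finite_range _)) ⟨⟨v, hvA⟩, rfl⟩)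
      rintro _ ⟨w, rfl⟩
      exact hHle w
    have hΔ1 : Δ ≠ 1 := by rintro h; rw [h] at heven; exact Nat.not_even_one heven
    have hΔpos : 0 < Δ := by
      by_contra h
      push_neg at h
      have h1 : 0 < edgeCount (G.induce A) := by
        have h2 := hov
        rw [IsOverfull] at h2
        omega
      have h2 := handshake (G.induce A)
      have h3 : ∑ w : ↥A, vdeg (G.induce A) w = 0 := by
        apply Finset.sum_eq_zero
        intro w _
        have := hHle w
        omega
      rw [h3] at h2
      omega
    have hΔ2 : 2 ≤ Δ := by omega
    -- v belongs to X
    have hvX : v ∈ X := by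
      by_contra hvX
      have hNvX : G.neighborSet v ⊆ X := by
        intro w hw
        have h0 : w ∈ X ∪ Y := hXY.symm ▸ Set.mem_univ w
        rcases h0 with h0 | h0
        · exact h0
        · have hvY : v ∈ Y := by
            have h1 : v ∈ X ∪ Y := hXY.symm ▸ Set.mem_univ v
            rcases h1 with h1 | h1
            · exact absurd h1 hvX
            · exact h1
          exact absurd ((hw : G.Adj v w)) (hindY v hvY w h0)
      have hNne : (G.neighborSet v).Nonempty := by
        apply Set.nonempty_of_ncard_ne_zero
        have : (G.neighborSet v).ncard = Δ := hvdeg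
        omega
      obtain ⟨x, hx⟩ := hNne
      have hxX : x ∈ X := hNvX hx
      have hsub : insert v (X \ {x}) ⊆ G.neighborSet x := by
        intro w hw
        rw [Set.mem_insert_iff] at hw
        rcases hw with hw | hw
        · rw [hw]
          exact ((hx : G.Adj v x)).symm
        · exact hclX hxX hw.1 (fun h => hw.2 h.symm)
      have hvnot : v ∉ X \ {x} := fun h => hvX h.1
      have h3 : (insert v (X \ {x})).ncard = (X \ {x}).ncard + 1 :=
        Set.ncard_insert_of_notMem hvnot (Set.toFinite _)
      have h4 : (X \ {x}).ncard = X.ncard - 1 :=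
        Set.ncard_diff_singleton_of_mem hxX
      have h5 : vdeg G x ≤ Δ := vdeg_le_maxDeg G x
      have h6 : (insert v (X \ {x})).ncard ≤ vdeg G x :=
        Set.ncard_le_ncard hsub (Set.toFinite _)
      have h7 : (G.neighborSet v).ncard ≤ X.ncard := Set.ncard_le_ncard hNvX (Set.toFinite _)
      have hXpos : 0 < X.ncard := (Set.ncard_pos (Set.toFinite _)).mpr ⟨x, hxX⟩
      have hvv : (G.neighborSet v).ncard = Δ := hvdeg
      have h8 : G.neighborSet v = X := by
        apply Set.eq_of_subset_of_ncard_le hNvX ?_ (Set.toFinite _)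
        omega
      have h9 : G.IsClique (insert v X) := by
        intro a ha b hb hab
        rw [Set.mem_insert_iff] at ha hb
        rcases ha with rfl | ha
        · rcases hb with rfl | hb
          · exact absurd rfl hab
          · exact (h8 ▸ hb : b ∈ G.neighborSet a)
        · rcases hb with rfl | hb
          · exact ((h8 ▸ ha : a ∈ G.neighborSet b) : G.Adj b a).symm
          · exact hclX ha hb hab
      have h10 := hmax.2 _ h9 (Set.subset_insert _ _)
      exact hvX (h10 ▸ Set.mem_insert v X)
    -- the universality of v among non-pendants
    have huniv : ∀ u, vdeg G u ≠ 1 → u ≠ v → G.Adj v u := by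
      intro u hunp hneuv
      by_contra hnadj
      have huA : u ∉ A := by
        intro h
        rw [hAdef, closedNbhd, Set.mem_insert_iff] at h
        rcases h with h | h
        · exact hneuv h
        · exact hnadj h
      have huX : u ∉ X := fun h => hnadj (hclX hvX h (Ne.symm hneuv))
      have hNuX : G.neighborSet u ⊆ X := by
        intro w hw
        have h0 : w ∈ X ∪ Y := hXY.symm ▸ Set.mem_univ w
        rcases h0 with h0 | h0
        · exact h0
        · have huY : u ∈ Y := by
            have h1 : u ∈ X ∪ Y := hXY.symm ▸ Set.mem_univ u
            rcases h1 with h1 | h1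
            · exact absurd h1 huX
            · exact h1
          exact absurd (hw : G.Adj u w) (hindY u huY w h0)
      have hu1 : (G.neighborSet u).Nonempty := by
        obtain ⟨p⟩ := hconn.preconnected u v
        cases p with
        | nil => exact absurd rfl hneuv
        | cons h q => exact ⟨_, h⟩
      have hu2 : 1 < (G.neighborSet u).ncard := by
        have hpos : 0 < (G.neighborSet u).ncard := (Set.ncard_pos (Set.toFinite _)).mpr hu1
        have : (G.neighborSet u).ncard ≠ 1 := hunp
        omega
      obtain ⟨x₁, hx₁, x₂, hx₂, h12⟩ := (Set.one_lt_ncard (Set.toFinite _)).mp hu2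
      have hxiv : ∀ {x}, x ∈ G.neighborSet u → x ∈ G.neighborSet v := by
        intro x hx
        have hxX : x ∈ X := hNuX hx
        have hxv : x ≠ v := fun h => hnadj ((h ▸ hx : G.Adj u v)).symm
        exact (hclX hvX hxX (Ne.symm hxv) : G.Adj v x)
      have hx₁A : x₁ ∈ A := Set.mem_insert_of_mem _ (hxiv hx₁)
      have hx₂A : x₂ ∈ A := Set.mem_insert_of_mem _ (hxiv hx₂)
      have hvx : ∀ {x}, x ∈ G.neighborSet u → 2 ≤ vdeg G x := by
        intro x hx
        have h1 : ({u, v} : Set V) ⊆ G.neighborSet x := by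
          intro w hw
          rw [Set.mem_insert_iff] at hw
          rcases hw with hw | hw
          · rw [hw]
            exact ((hx : G.Adj u x)).symm
          · rw [Set.mem_singleton_iff] at hw
            rw [hw]
            exact ((hxiv hx : G.Adj v x)).symm
        have h2 : ({u, v} : Set V).ncard = 2 := Set.ncard_pair hneuv
        have h3 := Set.ncard_le_ncard h1 (Set.toFinite _)
        rw [h2] at h3
        exact h3
      -- there is a pendant vertex inside A
      have hp : ∃ p ∈ A, vdeg G p = 1 := by
        by_contra h
        push_neg at h
        have hsub : A ⊆ insert c (G.neighborSet c) \ {u} := by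
          intro w hw
          constructor
          · by_cases hwc : w = c
            · exact hwc ▸ Set.mem_insert _ _
            · exact Set.mem_insert_of_mem _ (hc w (h w hw) hwc)
          · intro h'
            rw [Set.mem_singleton_iff] at h'
            exact huA (h' ▸ hw)
        have hu_mem : u ∈ insert c (G.neighborSet c) := by
          by_cases huc : u = c
          · exact huc ▸ Set.mem_insert _ _
          · exact Set.mem_insert_of_mem _ (hc u hunp huc)
        have h1 : (insert c (G.neighborSet c) \ {u}).ncard
            = (insert c (G.neighborSet c)).ncard - 1 :=
          Set.ncard_diff_singleton_of_mem hu_mem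
        have h2 : (insert c (G.neighborSet c)).ncard ≤ vdeg G c + 1 := by
          have := Set.ncard_insert_le c (G.neighborSet c)
          rw [vdeg]
          omega
        have h2b : 0 < (insert c (G.neighborSet c)).ncard :=
          (Set.ncard_pos (Set.toFinite _)).mpr ⟨c, Set.mem_insert _ _⟩
        have h3 : vdeg G c ≤ Δ := vdeg_le_maxDeg G c
        have h4 := Set.ncard_le_ncard hsub (Set.toFinite _)
        rw [hcardA, h1] at h4
        omega
      obtain ⟨p, hpA, hpdeg⟩ := hp
      have hpx₁ : p ≠ x₁ := by
        intro h
        rw [h] at hpdeg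
        have := hvx hx₁
        omega
      have hpx₂ : p ≠ x₂ := by
        intro h
        rw [h] at hpdeg
        have := hvx hx₂
        omega
      -- degree bounds in the induced subgraph
      have hb1 : vdeg (G.induce A) ⟨p, hpA⟩ ≤ 1 := by
        rw [vdeg_induce]
        have := Set.ncard_le_ncard (Set.inter_subset_right :
          A ∩ G.neighborSet p ⊆ G.neighborSet p) (Set.toFinite _)
        rw [← vdeg, hpdeg] at this
        exact this
      have hbx : ∀ (x : V) (hxA : x ∈ A), x ∈ G.neighborSet u →
          vdeg (G.induce A) ⟨x, hxA⟩ ≤ Δ - 1 := by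
        intro x hxA hx
        rw [vdeg_induce]
        show (A ∩ G.neighborSet x).ncard ≤ Δ - 1
        have hsub2 : A ∩ G.neighborSet x ⊆ G.neighborSet x \ {u} := by
          intro w hw
          exact ⟨hw.2, fun h' => huA ((Set.mem_singleton_iff.mp h') ▸ hw.1)⟩
        have h1 := Set.ncard_le_ncard hsub2 (Set.toFinite _)
        have h2 : (G.neighborSet x \ {u}).ncard = (G.neighborSet x).ncard - 1 :=
          Set.ncard_diff_singleton_of_mem ((hx : G.Adj u x).symm)
        have h3 : vdeg G x ≤ Δ := vdeg_le_maxDeg G x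
        rw [vdeg] at h3
        omega
      -- handshake and summation
      have hhs := handshake (G.induce A)
      have hcardU : Fintype.card ↥A = Δ + 1 := by
        rw [← Nat.card_eq_fintype_card, Nat.card_coe_set_eq, hcardA]
      set pa : ↥A := ⟨p, hpA⟩ with hpa
      set xa : ↥A := ⟨x₁, hx₁A⟩ with hxa
      set xb : ↥A := ⟨x₂, hx₂A⟩ with hxb
      have hne1 : pa ≠ xa := fun h => hpx₁ (congrArg Subtype.val h)
      have hne2 : pa ≠ xb := fun h => hpx₂ (congrArg Subtype.val h)
      have hne3 : xa ≠ xb := fun h => h12 (congrArg Subtype.val h)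
      set s : Finset ↥A := {pa, xa, xb} with hs
      have hscard : s.card = 3 := by
        rw [hs, Finset.card_insert_of_notMem (by simp [hne1, hne2]),
          Finset.card_insert_of_notMem (by simp [hne3]), Finset.card_singleton]
      have hsum_s : ∑ w ∈ s, vdeg (G.induce A) w ≤ 1 + (Δ - 1) + (Δ - 1) := by
        rw [hs, Finset.sum_insert (by simp [hne1, hne2]),
          Finset.sum_insert (by simp [hne3]), Finset.sum_singleton]
        have b1 := hb1
        have b2 := hbx x₁ hx₁A hx₁
        have b3 := hbx x₂ hx₂A hx₂
        rw [← hxa] at b2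
        rw [← hxb] at b3
        omega
      have hsum_rest : ∑ w ∈ Finset.univ \ s, vdeg (G.induce A) w ≤ (Δ + 1 - 3) * Δ := by
        have h1 : ∑ w ∈ Finset.univ \ s, vdeg (G.induce A) w
            ≤ (Finset.univ \ s).card • Δ :=
          Finset.sum_le_card_nsmul _ _ _ (fun x _ => hHle x)
        have h2 : (Finset.univ \ s).card = Δ + 1 - 3 := by
          rw [Finset.card_sdiff_of_subset (Finset.subset_univ s), Finset.card_univ, hcardU, hscard]
        rw [h2, smul_eq_mul] at h1
        exact h1
      have hsplit_sum : ∑ w ∈ Finset.univ \ s, vdeg (G.induce A) w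
          + ∑ w ∈ s, vdeg (G.induce A) w = ∑ w : ↥A, vdeg (G.induce A) w :=
        Finset.sum_sdiff (Finset.subset_univ s)
      have main1 : 2 * edgeCount (G.induce A) ≤ 1 + (Δ - 1) + (Δ - 1) + (Δ + 1 - 3) * Δ := by
        rw [← hhs, ← hsplit_sum]
        omega
      -- overfull inequality
      obtain ⟨k, hk⟩ := heven
      have hdiv : (Δ + 1) / 2 = k := by omega
      have main2 : Δ * k < edgeCount (G.induce A) := by
        have h0 := hov
        rw [IsOverfull, hmaxH] at h0
        have h1 : Nat.card ↥A = Δ + 1 := by rw [Nat.card_coe_set_eq, hcardA]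
        rw [h1, hdiv] at h0
        exact h0
      obtain ⟨j, hj⟩ : ∃ j, k = j + 1 := ⟨k - 1, by omega⟩
      have hΔj : Δ = 2 * j + 2 := by omega
      have e1 : 1 + (Δ - 1) + (Δ - 1) + (Δ + 1 - 3) * Δ = 4 * (j * j) + 8 * j + 3 := by
        have q1 : Δ - 1 = 2 * j + 1 := by omega
        have q2 : Δ + 1 - 3 = 2 * j := by omega
        rw [q1, q2, hΔj]
        ring
      have e2 : Δ * k = 2 * (j * j) + 4 * j + 2 := by
        rw [hΔj, hj]
        ring
      rw [e1] at main1
      rw [e2] at main2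
      linarith
    refine ⟨v, hvX, ⟨?_, ?_⟩, hmaxH, hov⟩
    · intro h
      rw [pendants, Set.mem_setOf_eq] at h
      rw [hvdeg] at h
      exact hΔ1 h
    · intro u hu hne
      have hunp : vdeg G u ≠ 1 := by
        intro h
        exact hu (by rw [pendants, Set.mem_setOf_eq]; exact h)
      exact huniv u hunp hne
  · -- backward direction
    rintro ⟨v, hvX, huniv, hmaxH, hov⟩
    set A := closedNbhd G v with hAdef
    have hvA : v ∈ A := Set.mem_insert _ _
    have hNA : Nonempty ↥A := ⟨⟨v, hvA⟩⟩
    have hcardA : A.ncard = vdeg G v + 1 := by rw [hAdef, ncard_closedNbhd]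
    obtain ⟨w, hw⟩ : ∃ w : ↥A, vdeg (G.induce A) w = maxDeg (G.induce A) := by
      have h := Nat.sSup_mem (Set.range_nonempty (fun w : ↥A => vdeg (G.induce A) w))
        (Set.Finite.bddAbove (Set.finite_range _))
      obtain ⟨w, hw⟩ := h
      exact ⟨w, hw⟩
    have h1 : vdeg (G.induce A) w ≤ vdeg G v := by
      rw [vdeg_induce]
      have hsub : A ∩ G.neighborSet w.val ⊆ A \ {w.val} := by
        intro z hz
        refine ⟨hz.1, fun h' => ?_⟩
        rw [Set.mem_singleton_iff] at h'
        subst h'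
        exact G.irrefl hz.2
      have h2 := Set.ncard_le_ncard hsub (Set.toFinite _)
      have h3 : (A \ {w.val}).ncard = A.ncard - 1 :=
        Set.ncard_diff_singleton_of_mem w.2
      omega
    have h2 : vdeg G v ≤ maxDeg G := vdeg_le_maxDeg G v
    have h3 : vdeg G v = maxDeg G := by
      refine le_antisymm h2 ?_
      rw [← hmaxH, ← hw]
      exact h1
    exact ⟨v, h3, hov⟩
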